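/- Let B be a bowtie graph with center vertex w and other vertices x₁, x₂, y₁, y₂ where x₁x₂ and y₁y₂ are edges and w is adjacent to all four. Let G be a graph, v ∈ V(G), and let G_v^B be formed by identifying w with v. If D is an odd-dominating set of G with v ∈ D, then D, D ∪ {x₁,x₂}, D ∪ {y₁,y₂}, and D ∪ {x₁,x₂,y₁,y₂} are all odd-dominating sets of G_v^B; if v ∉ D, then D ∪ {xᵢ, yⱼ} is odd-dominating in G_v^B for each of the four choices i, j ∈ {1,2}. -/
import Mathlib


open SimpleGraph Finset
open scoped Classical

/-- The closed neighborhood `N[v]` of a vertex `v`. -/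
def closedNbhd {V : Type*} (G : SimpleGraph V) (v : V) : Set V :=
  insert v (G.neighborSet v)

/-- `D` is an odd-dominating set: `|N[v] ∩ D|` is odd for every vertex `v`. -/
def OddDomSet {V : Type*} (G : SimpleGraph V) (D : Set V) : Prop :=
  ∀ v, Odd ((closedNbhd G v ∩ D).ncard)

/-- `f` is an odd-sum coloring: a proper coloring with positive integer colors
such that the sum of colors over each closed neighborhood is odd. -/
def IsOddSumColoring {V : Type*} [Fintype V] (G : SimpleGraph V) (f : V → ℕ) : Prop :=
  (∀ v, 0 < f v) ∧ (∀ ⦃a b⦄, G.Adj a b → f a ≠ f b) ∧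
  (∀ v, Odd (∑ w ∈ (closedNbhd G v).toFinset, f w))

/-- The odd-sum chromatic number: minimum number of colors used in an odd-sum coloring. -/
noncomputable def chiOS {V : Type*} [Fintype V] (G : SimpleGraph V) : ℕ :=
  sInf {n | ∃ f : V → ℕ, IsOddSumColoring G f ∧ (Finset.univ.image f).card = n}

/-- `G_v^B`: the graph obtained from `G` by identifying the center of a new bowtie
with the vertex `v`.  The new vertices are `x₁ = inr 0`, `x₂ = inr 1`,
`y₁ = inr 2`, `y₂ = inr 3`; edges are those of `G`, together with
`v x₁, v x₂, v y₁, v y₂, x₁x₂, y₁y₂`. -/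
def bowtieAttach {V : Type*} (G : SimpleGraph V) (v : V) : SimpleGraph (V ⊕ Fin 4) :=
  SimpleGraph.fromRel (fun a b =>
    match a, b with
    | .inl x, .inl y => G.Adj x y
    | .inl x, .inr _ => x = v
    | .inr i, .inr j => (i = 0 ∧ j = 1) ∨ (i = 2 ∧ j = 3)
    | _, _ => False)

section Aux
variable {V : Type*} (G : SimpleGraph V) (v : V)

lemma adj_inl_inl (x y : V) : (bowtieAttach G v).Adj (.inl x) (.inl y) ↔ G.Adj x y := by
  simp only [bowtieAttach, SimpleGraph.fromRel_adj]
  constructor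
  · rintro ⟨hne, h | h⟩
    · exact h
    · exact h.symm
  · intro h; exact ⟨by simpa using h.ne, Or.inl h⟩

lemma adj_inl_inr (x : V) (i : Fin 4) :
    (bowtieAttach G v).Adj (.inl x) (.inr i) ↔ x = v := by
  simp [bowtieAttach, SimpleGraph.fromRel_adj]

lemma nbhd_inl (u : V) (hu : u ≠ v) :
    closedNbhd (bowtieAttach G v) (.inl u) = Sum.inl '' closedNbhd G u := by
  ext w
  cases w with
  | inl y =>
    simp [closedNbhd, SimpleGraph.mem_neighborSet, adj_inl_inl, eq_comm (a := y)]
  | inr i =>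
    simp [closedNbhd, SimpleGraph.mem_neighborSet, adj_inl_inr, hu]

lemma nbhd_inl_v :
    closedNbhd (bowtieAttach G v) (.inl v) = Sum.inl '' closedNbhd G v ∪ Set.range Sum.inr := by
  ext w
  cases w with
  | inl y =>
    simp [closedNbhd, SimpleGraph.mem_neighborSet, adj_inl_inl, eq_comm (a := y)]
  | inr i =>
    simp [closedNbhd, SimpleGraph.mem_neighborSet, adj_inl_inr]

def pairF : Fin 4 → Fin 4 := ![1, 0, 3, 2]

lemma nbhd_inr (i : Fin 4) :
    closedNbhd (bowtieAttach G v) (.inr i) = {Sum.inl v, Sum.inr i, Sum.inr (pairF i)} := by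
  ext w
  cases w with
  | inl y =>
    simp [closedNbhd, SimpleGraph.mem_neighborSet, (bowtieAttach G v).adj_comm, adj_inl_inr]
  | inr j =>
    simp only [closedNbhd, SimpleGraph.mem_neighborSet, Set.mem_insert_iff,
      Set.mem_singleton_iff, bowtieAttach, SimpleGraph.fromRel_adj]
    fin_cases i <;> fin_cases j <;> simp [pairF]

lemma inter_inl (A D : Set V) (T : Set (Fin 4)) :
    (Sum.inl '' A : Set (V ⊕ Fin 4)) ∩ (Sum.inl '' D ∪ Sum.inr '' T) = Sum.inl '' (A ∩ D) := by
  ext w; cases w <;> simp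

lemma inter_inl_v (A D : Set V) (T : Set (Fin 4)) :
    ((Sum.inl '' A ∪ Set.range Sum.inr) : Set (V ⊕ Fin 4)) ∩ (Sum.inl '' D ∪ Sum.inr '' T)
      = Sum.inl '' (A ∩ D) ∪ Sum.inr '' T := by
  ext w; cases w <;> simp

lemma ncard_mixed [Fintype V] (A : Set V) (T : Set (Fin 4)) :
    ((Sum.inl '' A ∪ Sum.inr '' T : Set (V ⊕ Fin 4))).ncard = A.ncard + T.ncard := by
  rw [Set.ncard_union_eq (by simp [Set.disjoint_left]) (Set.toFinite _) (Set.toFinite _),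
    Set.ncard_image_of_injective _ Sum.inl_injective,
    Set.ncard_image_of_injective _ Sum.inr_injective]

lemma master {V : Type*} [Fintype V] (G : SimpleGraph V) (v : V) (D : Set V)
    (hD : OddDomSet G D) (T : Set (Fin 4))
    (h01 : Odd ((({0,1} : Set (Fin 4)) ∩ T).ncard + if v ∈ D then 1 else 0))
    (h23 : Odd ((({2,3} : Set (Fin 4)) ∩ T).ncard + if v ∈ D then 1 else 0))
    (hT : Even T.ncard) :
    OddDomSet (bowtieAttach G v) (Sum.inl '' D ∪ Sum.inr '' T) := by
  intro w
  cases w with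
  | inl u =>
    by_cases hu : u = v
    · subst hu
      rw [nbhd_inl_v, inter_inl_v, ncard_mixed]
      exact (hD u).add_even hT
    · rw [nbhd_inl _ _ u hu, inter_inl, Set.ncard_image_of_injective _ Sum.inl_injective]
      exact hD u
  | inr i =>
    rw [nbhd_inr]
    have key : ({Sum.inl v, Sum.inr i, Sum.inr (pairF i)} : Set (V ⊕ Fin 4)) ∩
        (Sum.inl '' D ∪ Sum.inr '' T)
        = (if v ∈ D then {Sum.inl v} else ∅) ∪ Sum.inr '' ({i, pairF i} ∩ T) := by
      ext w
      cases w with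
      | inl y =>
        by_cases hv : v ∈ D <;>
          simp [hv] <;> rintro rfl <;> simp_all
      | inr j =>
        by_cases hv : v ∈ D <;> simp [hv, and_comm]
    rw [key, Set.ncard_union_eq (by by_cases hv : v ∈ D <;> simp [hv, Set.disjoint_left])
      (Set.toFinite _) (Set.toFinite _), Set.ncard_image_of_injective _ Sum.inr_injective]
    have hpair : ({i, pairF i} : Set (Fin 4)) = {0,1} ∨ ({i, pairF i} : Set (Fin 4)) = {2,3} := by
      fin_cases i
      · left; simp [pairF]
      · left; ext x; simp [pairF]; tauto
      · right; simp [pairF]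
      · right; ext x; simp [pairF]; tauto
    have : ((if v ∈ D then ({Sum.inl v} : Set (V ⊕ Fin 4)) else ∅)).ncard
        = if v ∈ D then 1 else 0 := by by_cases hv : v ∈ D <;> simp [hv]
    rw [this]
    rcases hpair with h | h <;> rw [h, Nat.add_comm]
    · exact h01
    · exact h23

end Aux

theorem bowtieAttach_extensions {V : Type*} [Fintype V]
    (G : SimpleGraph V) (v : V) (D : Set V) (hD : OddDomSet G D) :
    (v ∈ D →
      OddDomSet (bowtieAttach G v) (Sum.inl '' D) ∧
      OddDomSet (bowtieAttach G v) (Sum.inl '' D ∪ {Sum.inr 0, Sum.inr 1}) ∧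
      OddDomSet (bowtieAttach G v) (Sum.inl '' D ∪ {Sum.inr 2, Sum.inr 3}) ∧
      OddDomSet (bowtieAttach G v)
        (Sum.inl '' D ∪ {Sum.inr 0, Sum.inr 1, Sum.inr 2, Sum.inr 3})) ∧
    (v ∉ D →
      OddDomSet (bowtieAttach G v) (Sum.inl '' D ∪ {Sum.inr 0, Sum.inr 2}) ∧
      OddDomSet (bowtieAttach G v) (Sum.inl '' D ∪ {Sum.inr 0, Sum.inr 3}) ∧
      OddDomSet (bowtieAttach G v) (Sum.inl '' D ∪ {Sum.inr 1, Sum.inr 2}) ∧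
      OddDomSet (bowtieAttach G v) (Sum.inl '' D ∪ {Sum.inr 1, Sum.inr 3})) := by
  constructor
  · intro hv
    have hit : (if v ∈ D then 1 else 0) = 1 := if_pos hv
    refine ⟨?_, ?_, ?_, ?_⟩
    · simpa using master G v D hD ∅ (by simp [hit]) (by simp [hit]) (by simp)
    · have hT : ({Sum.inr 0, Sum.inr 1} : Set (V ⊕ Fin 4)) = Sum.inr '' {0, 1} := by
        simp [Set.image_insert_eq]
      rw [hT]
      refine master G v D hD _ ?_ ?_ ?_
      · rw [Set.inter_self, Set.ncard_pair (by decide), hit]; decide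
      · rw [show (({2,3} : Set (Fin 4)) ∩ {0,1}) = ∅ by ext x; fin_cases x <;> simp, hit]
        simp
      · rw [Set.ncard_pair (by decide)]; decide
    · have hT : ({Sum.inr 2, Sum.inr 3} : Set (V ⊕ Fin 4)) = Sum.inr '' {2, 3} := by
        simp [Set.image_insert_eq]
      rw [hT]
      refine master G v D hD _ ?_ ?_ ?_
      · rw [show (({0,1} : Set (Fin 4)) ∩ {2,3}) = ∅ by ext x; fin_cases x <;> simp, hit]
        simp
      · rw [Set.inter_self, Set.ncard_pair (by decide), hit]; decide
      · rw [Set.ncard_pair (by decide)]; decide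
    · have hT : ({Sum.inr 0, Sum.inr 1, Sum.inr 2, Sum.inr 3} : Set (V ⊕ Fin 4))
          = Sum.inr '' {0, 1, 2, 3} := by simp [Set.image_insert_eq]
      have huniv : ({0,1,2,3} : Set (Fin 4)) = Set.univ := by ext x; fin_cases x <;> simp
      rw [hT]
      refine master G v D hD _ ?_ ?_ ?_
      · rw [huniv, Set.inter_univ, Set.ncard_pair (by decide), hit]; decide
      · rw [huniv, Set.inter_univ, Set.ncard_pair (by decide), hit]; decide
      · rw [huniv, Set.ncard_univ, Nat.card_eq_fintype_card]; decide
  · intro hv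
    have hit : (if v ∈ D then 1 else 0) = 0 := if_neg hv
    have key : ∀ a b : Fin 4, (a = 0 ∨ a = 1) → (b = 2 ∨ b = 3) →
        OddDomSet (bowtieAttach G v) (Sum.inl '' D ∪ {Sum.inr a, Sum.inr b}) := by
      intro a b ha hb
      have hT : ({Sum.inr a, Sum.inr b} : Set (V ⊕ Fin 4)) = Sum.inr '' {a, b} := by
        simp [Set.image_insert_eq]
      rw [hT]
      refine master G v D hD _ ?_ ?_ ?_
      · rw [show (({0,1} : Set (Fin 4)) ∩ {a, b}) = {a} by
          rcases ha with rfl | rfl <;> rcases hb with rfl | rfl <;> ext x <;>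
            fin_cases x <;> simp, hit]
        simp
      · rw [show (({2,3} : Set (Fin 4)) ∩ {a, b}) = {b} by
          rcases ha with rfl | rfl <;> rcases hb with rfl | rfl <;> ext x <;>
            fin_cases x <;> simp, hit]
        simp
      · rcases ha with rfl | rfl <;> rcases hb with rfl | rfl <;>
          rw [Set.ncard_pair (by decide)] <;> decide
    exact ⟨key 0 2 (by simp) (by simp), key 0 3 (by simp) (by simp),
      key 1 2 (by simp) (by simp), key 1 3 (by simp) (by simp)⟩
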